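/- Corollary of the Phragmén–Lindelöf principle: let D ⊆ ℝ^d be a bounded domain with non-polar boundary, o ∈ D, c ≥ 0, and V subharmonic on D \ {o}. If limsup_{o≠x→o} V(x)/(−K_{d-2}(x,o)) ≤ c and limsup_{D∋x→y} V(x) ≤ 0 for all y ∈ ∂D, then V(x) ≤ c·g_D(x,o) for all x ∈ D \ {o}. -/

import Mathlib

open MeasureTheory Metric Filter Topology
open scoped ENNReal NNReal
open scoped Classical

/-- Positive part of an extended real number, as an extended nonnegative real. -/
noncomputable def epos (x : EReal) : ℝ≥0∞ := if x = ⊤ then ⊤ else ENNReal.ofReal x.toReal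

/-- Integral of an extended-real-valued function against a positive measure,
defined as the difference of the upper integrals of the positive and negative parts. -/
noncomputable def eintegral {α : Type*} [MeasurableSpace α] (μ : Measure α) (f : α → EReal) : EReal :=
  ((∫⁻ a, epos (f a) ∂μ : ℝ≥0∞) : EReal) - ((∫⁻ a, epos (-(f a)) ∂μ : ℝ≥0∞) : EReal)

abbrev Rd (d : ℕ) := EuclideanSpace ℝ (Fin d)

/-- The kernel `k_{d-2}`: `t` for `d = 1`, `log t` for `d = 2`, `-t^{-(d-2)}` for `d ≥ 3`,
with value `⊥` at `t ≤ 0` when `d ≥ 2`. -/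
noncomputable def kk (d : ℕ) (t : ℝ) : EReal :=
  if d = 1 then (t : EReal)
  else if t ≤ 0 then ⊥
  else if d = 2 then ((Real.log t : ℝ) : EReal)
  else (((-(t ^ (d - 2 : ℕ))⁻¹) : ℝ) : EReal)

/-- Subharmonicity on an open set: upper semicontinuity, values `< ⊤`, and the
sub-mean-value inequality over balls. -/
def IsSubhOn {d : ℕ} (O : Set (Rd d)) (u : Rd d → EReal) : Prop :=
  UpperSemicontinuousOn u O ∧ (∀ x ∈ O, u x < ⊤) ∧
  ∀ x ∈ O, ∀ r : ℝ, 0 < r → closedBall x r ⊆ O →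
    u x * (((volume (ball x r)).toReal : ℝ) : EReal) ≤ eintegral (volume.restrict (ball x r)) u

/-- A set `E ⊆ ℝ^d` is polar if it is contained in the `-∞`-set of a subharmonic
function on `ℝ^d` that is not identically `-∞`. -/
def IsPolar {d : ℕ} (E : Set (Rd d)) : Prop :=
  ∃ u : Rd d → EReal, IsSubhOn Set.univ u ∧ (∃ x, u x ≠ ⊥) ∧ ∀ x ∈ E, u x = ⊥

namespace PF

lemma epos_coe (r : ℝ) : epos (r : EReal) = ENNReal.ofReal r := by
  simp [epos, EReal.coe_ne_top]

lemma epos_bot : epos ⊥ = 0 := by simp [epos]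

lemma epos_top : epos ⊤ = ⊤ := by simp [epos]

lemma epos_neg_coe (r : ℝ) : epos (-(r : EReal)) = ENNReal.ofReal (-r) := by
  rw [← EReal.coe_neg, epos_coe]

lemma epos_mono : Monotone epos := by
  intro x y h
  induction x using EReal.rec with
  | bot => simp [epos_bot]
  | top => rw [top_le_iff.1 h]
  | coe a =>
    induction y using EReal.rec with
    | bot => exact absurd h (by simp)
    | top => simp [epos_top]
    | coe b => simp only [epos_coe]; exact ENNReal.ofReal_le_ofReal (EReal.coe_le_coe_iff.1 h)

lemma epos_eq_zero_iff {x : EReal} : epos x = 0 ↔ x ≤ 0 := by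
  induction x using EReal.rec with
  | bot => simp [epos_bot]
  | top => simp [epos_top]
  | coe a =>
    simp only [epos_coe, ENNReal.ofReal_eq_zero]
    exact_mod_cast Iff.rfl

lemma epos_add_le (x y : EReal) : epos (x + y) ≤ epos x + epos y := by
  induction x using EReal.rec with
  | bot => simp [EReal.bot_add, epos_bot]
  | top => simp [epos_top]
  | coe a =>
    induction y using EReal.rec with
    | bot => simp [epos_bot]
    | top => simp [epos_top]
    | coe b =>
      rw [← EReal.coe_add, epos_coe, epos_coe, epos_coe]
      exact ENNReal.ofReal_add_le

lemma max_identity (a b : ℝ) :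
    max (a + b) 0 + max (-a) 0 + max (-b) 0 = max (-(a + b)) 0 + max a 0 + max b 0 := by
  simp only [max_def]
  split_ifs <;> linarith

lemma sixterm {x : EReal} (hx : x ≠ ⊤) (b : ℝ) :
    epos (x + b) + (epos (-x) + ENNReal.ofReal (-b)) =
      epos (-(x + b)) + (epos x + ENNReal.ofReal b) := by
  induction x using EReal.rec with
  | top => exact absurd rfl hx
  | bot =>
    rw [EReal.bot_add]
    simp [epos_bot, epos_top]
  | coe a =>
    rw [← EReal.coe_add, epos_coe, epos_neg_coe, epos_neg_coe, epos_coe]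
    have h : ∀ t : ℝ, ENNReal.ofReal t = ENNReal.ofReal (max t 0) := by
      intro t
      rcases le_total t 0 with h | h
      · rw [max_eq_right h, ENNReal.ofReal_eq_zero.2 h, ENNReal.ofReal_zero]
      · rw [max_eq_left h]
    rw [h (a + b), h (-a), h (-b), h (-(a + b)), h a, h b,
      ← ENNReal.ofReal_add (le_max_right _ 0) (le_max_right _ 0),
      ← ENNReal.ofReal_add (le_max_right _ 0) (by positivity),
      ← ENNReal.ofReal_add (le_max_right _ 0) (le_max_right _ 0),
      ← ENNReal.ofReal_add (le_max_right _ 0) (by positivity)]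
    congr 1
    simp only [max_def]
    split_ifs <;> linarith

lemma measurable_epos : Measurable epos := by
  unfold epos
  refine Measurable.ite ?_ measurable_const
    (ENNReal.measurable_ofReal.comp measurable_ereal_toReal)
  exact MeasurableSet.singleton (⊤ : EReal)

end PF

namespace PF

lemma coe_ennreal_real (a : ℝ≥0∞) (ha : a ≠ ⊤) : (a : EReal) = ((a.toReal : ℝ) : EReal) := by
  conv_lhs => rw [← ENNReal.ofReal_toReal ha]
  rw [EReal.coe_ennreal_ofReal, max_eq_left ENNReal.toReal_nonneg]

lemma ecoe_sub (a b : ℝ≥0∞) (ha : a ≠ ⊤) (hb : b ≠ ⊤) :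
    (a : EReal) - (b : EReal) = ((a.toReal - b.toReal : ℝ) : EReal) := by
  rw [coe_ennreal_real a ha, coe_ennreal_real b hb, ← EReal.coe_sub]

lemma aemeasurable_add_real {α : Type*} [MeasurableSpace α] {μ : Measure α}
    {f : α → EReal} {φ : α → ℝ} (hf : AEMeasurable f μ) (hφ : AEMeasurable φ μ) :
    AEMeasurable (fun x => f x + (φ x : EReal)) μ := by
  obtain ⟨F, hFm, hFe⟩ := hf
  obtain ⟨ψ, hψm, hψe⟩ := hφ
  have key : (fun x => F x + (ψ x : EReal)) =
      fun x => if F x = ⊤ then (⊤ : EReal) else if F x = ⊥ then ⊥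
        else (((F x).toReal + ψ x : ℝ) : EReal) := by
    funext x
    induction F x using EReal.rec with
    | bot => simp [EReal.bot_add]
    | top => simp [EReal.top_add_coe]
    | coe a => simp [← EReal.coe_add]
  have hmeas : Measurable (fun x => F x + (ψ x : EReal)) := by
    rw [key]
    refine Measurable.ite ?_ measurable_const (Measurable.ite ?_ measurable_const ?_)
    · exact hFm (measurableSet_singleton (⊤ : EReal))
    · exact hFm (measurableSet_singleton (⊥ : EReal))
    · exact ((hFm.ereal_toReal.add hψm)).coe_real_ereal
  refine ⟨_, hmeas, ?_⟩
  filter_upwards [hFe, hψe] with x h1 h2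
  rw [h1, h2]

lemma eintegral_congr_ae {α : Type*} [MeasurableSpace α] {μ : Measure α}
    {f h : α → EReal} (he : f =ᵐ[μ] h) : eintegral μ f = eintegral μ h := by
  unfold eintegral
  rw [lintegral_congr_ae (show (fun a => epos (f a)) =ᵐ[μ] (fun a => epos (h a)) from
      he.mono fun x hx => by simp only [hx]),
    lintegral_congr_ae (show (fun a => epos (-f a)) =ᵐ[μ] (fun a => epos (-h a)) from
      he.mono fun x hx => by simp only [hx])]

lemma eintegral_coe_real {α : Type*} [MeasurableSpace α] {μ : Measure α}
    {φ : α → ℝ} (hφ : Integrable φ μ) :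
    eintegral μ (fun x => (φ x : EReal)) = ((∫ x, φ x ∂μ : ℝ) : EReal) := by
  unfold eintegral
  simp only [epos_coe, epos_neg_coe]
  have hneg : ∫⁻ x, ENNReal.ofReal (-φ x) ∂μ = ∫⁻ x, ENNReal.ofReal ((-φ) x) ∂μ := rfl
  rw [hneg, ecoe_sub _ _ hφ.lintegral_lt_top.ne hφ.neg.lintegral_lt_top.ne]
  rw [integral_eq_lintegral_pos_part_sub_lintegral_neg_part hφ]
  push_cast
  norm_num

end PF

namespace PF

lemma eintegral_add_real {α : Type*} [MeasurableSpace α] (μ : Measure α) [IsFiniteMeasure μ]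
    {f : α → EReal} {φ : α → ℝ} (hf : AEMeasurable f μ) (hφi : Integrable φ μ)
    (hftop : ∀ᵐ x ∂μ, f x ≠ ⊤) (hfP : ∫⁻ x, epos (f x) ∂μ ≠ ⊤) :
    eintegral μ (fun x => f x + (φ x : EReal)) =
      eintegral μ f + ((∫ x, φ x ∂μ : ℝ) : EReal) := by
  have hφm : AEMeasurable φ μ := hφi.aemeasurable
  have hsum : AEMeasurable (fun x => f x + (φ x : EReal)) μ := aemeasurable_add_real hf hφm
  have hem : AEMeasurable (fun x => epos (f x + (φ x : EReal))) μ :=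
    measurable_epos.comp_aemeasurable hsum
  have hem2 : AEMeasurable (fun x => epos (-(f x + (φ x : EReal)))) μ :=
    measurable_epos.comp_aemeasurable hsum.neg
  have hemf : AEMeasurable (fun x => epos (f x)) μ := measurable_epos.comp_aemeasurable hf
  have hemnf : AEMeasurable (fun x => epos (-f x)) μ :=
    measurable_epos.comp_aemeasurable (measurable_neg.comp_aemeasurable hf)
  set P := ∫⁻ x, epos (f x) ∂μ with hP
  set N := ∫⁻ x, epos (-(f x)) ∂μ with hN
  set P₁ := ∫⁻ x, epos (f x + (φ x : EReal)) ∂μ with hP₁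
  set N₁ := ∫⁻ x, epos (-(f x + (φ x : EReal))) ∂μ with hN₁
  set p := ∫⁻ x, ENNReal.ofReal (φ x) ∂μ with hp
  set n := ∫⁻ x, ENNReal.ofReal (-φ x) ∂μ with hn
  have hpfin : p ≠ ⊤ := hφi.lintegral_lt_top.ne
  have hnfin : n ≠ ⊤ := by
    have := hφi.neg.lintegral_lt_top.ne
    simpa using this
  -- the six-term identity, integrated
  have key : P₁ + (N + n) = N₁ + (P + p) := by
    have h1 : ∫⁻ x, (epos (f x + (φ x : EReal)) + (epos (-(f x)) + ENNReal.ofReal (-φ x))) ∂μ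
        = ∫⁻ x, (epos (-(f x + (φ x : EReal))) + (epos (f x) + ENNReal.ofReal (φ x))) ∂μ := by
      apply lintegral_congr_ae
      filter_upwards [hftop] with x hx
      exact sixterm hx (φ x)
    rwa [lintegral_add_left' hem, lintegral_add_left' hemnf,
      lintegral_add_left' hem2, lintegral_add_left' hemf] at h1
  have hle : P₁ ≤ P + p := by
    rw [hP₁, hP, hp, ← lintegral_add_left' hemf]
    exact lintegral_mono fun x => le_trans (epos_add_le _ _) (by rw [epos_coe])
  have hP₁fin : P₁ ≠ ⊤ :=
    fun h => (ENNReal.add_ne_top.2 ⟨hfP, hpfin⟩) (top_le_iff.1 (h ▸ hle))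
  have hint : (∫ x, φ x ∂μ : ℝ) = p.toReal - n.toReal := by
    rw [integral_eq_lintegral_pos_part_sub_lintegral_neg_part hφi]
  have hgoal : eintegral μ (fun x => f x + (φ x : EReal)) = (P₁ : EReal) - (N₁ : EReal) := rfl
  have hgoal2 : eintegral μ f = (P : EReal) - (N : EReal) := rfl
  rw [hgoal, hgoal2]
  by_cases hNtop : N = ⊤
  · have hN₁top : N₁ = ⊤ := by
      by_contra hN₁
      have h2 : N₁ + (P + p) ≠ ⊤ :=
        ENNReal.add_ne_top.2 ⟨hN₁, ENNReal.add_ne_top.2 ⟨hfP, hpfin⟩⟩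
      rw [← key] at h2
      exact h2 (by rw [hNtop]; simp [ENNReal.add_eq_top])
    rw [hN₁top, hNtop]
    simp only [EReal.coe_ennreal_top, EReal.sub_top, EReal.bot_add]
  · have hN₁fin : N₁ ≠ ⊤ := by
      intro hN₁
      have h2 : P₁ + (N + n) = ⊤ := by rw [key, hN₁]; simp [ENNReal.add_eq_top]
      rcases ENNReal.add_eq_top.1 h2 with h | h
      · exact hP₁fin h
      · rcases ENNReal.add_eq_top.1 h with h' | h'
        · exact hNtop h'
        · exact hnfin h'
    have hreal : P₁.toReal + (N.toReal + n.toReal) = N₁.toReal + (P.toReal + p.toReal) := by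
      have h3 := congrArg ENNReal.toReal key
      rwa [ENNReal.toReal_add hP₁fin (ENNReal.add_ne_top.2 ⟨hNtop, hnfin⟩),
        ENNReal.toReal_add hNtop hnfin,
        ENNReal.toReal_add hN₁fin (ENNReal.add_ne_top.2 ⟨hfP, hpfin⟩),
        ENNReal.toReal_add hfP hpfin] at h3
    rw [ecoe_sub _ _ hP₁fin hN₁fin, ecoe_sub _ _ hfP hNtop, hint, ← EReal.coe_add]
    rw [EReal.coe_eq_coe_iff]
    linarith

end PF

namespace PF

variable {d : ℕ}

lemma usc_isOpen_lt {O : Set (Rd d)} (hO : IsOpen O) {u : Rd d → EReal}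
    (hu : UpperSemicontinuousOn u O) (a : EReal) :
    IsOpen {x | x ∈ O ∧ u x < a} := by
  rw [isOpen_iff_mem_nhds]
  rintro x ⟨hxO, hxa⟩
  have h1 : ∀ᶠ y in 𝓝 x, u y < a := by
    have := hu x hxO a hxa
    rwa [← hO.nhdsWithin_eq hxO]
  filter_upwards [h1, hO.mem_nhds hxO] with y h2 h3
  exact ⟨h3, h2⟩

lemma usc_measurable_ext {O : Set (Rd d)} (hO : IsOpen O) {u : Rd d → EReal}
    (hu : UpperSemicontinuousOn u O) :
    Measurable (fun x => if x ∈ O then u x else ⊥) := by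
  apply measurable_of_Iio
  intro a
  have : (fun x => if x ∈ O then u x else ⊥) ⁻¹' (Set.Iio a)
      = {x | x ∈ O ∧ u x < a} ∪ ({x | (⊥ : EReal) < a} ∩ Oᶜ) := by
    ext x
    by_cases hx : x ∈ O <;> simp [hx, Set.mem_Iio]
  rw [this]
  refine MeasurableSet.union ((usc_isOpen_lt hO hu a).measurableSet) ?_
  by_cases hba : (⊥ : EReal) < a
  · simp only [hba]
    simpa using hO.isClosed_compl.measurableSet
  · simp only [hba]
    simp

lemma usc_aemeasurable {O : Set (Rd d)} (hO : IsOpen O) {u : Rd d → EReal}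
    (hu : UpperSemicontinuousOn u O) {s : Set (Rd d)} (hs : MeasurableSet s) (hsO : s ⊆ O) :
    AEMeasurable u (volume.restrict s) := by
  refine ⟨fun x => if x ∈ O then u x else ⊥, usc_measurable_ext hO hu, ?_⟩
  refine ae_restrict_of_forall_mem hs fun x hx => ?_
  simp [hsO hx]

lemma usc_bddAbove {O : Set (Rd d)} (hO : IsOpen O) {u : Rd d → EReal}
    (hu : UpperSemicontinuousOn u O) (hfin : ∀ x ∈ O, u x < ⊤)
    {K : Set (Rd d)} (hK : IsCompact K) (hKO : K ⊆ O) :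
    ∃ M : ℝ, ∀ x ∈ K, u x ≤ (M : EReal) := by
  obtain ⟨n, hn⟩ := hK.elim_directed_cover (fun n : ℕ => {x | x ∈ O ∧ u x < (n : EReal)})
    (fun n => usc_isOpen_lt hO hu _)
    (by
      intro x hx
      have hx' := hfin x (hKO hx)
      obtain ⟨r, hr1, hr2⟩ := exists_between hx'
      induction r using EReal.rec with
      | bot => exact absurd hr1 (by simp)
      | top => exact absurd hr2 (by simp)
      | coe q =>
        obtain ⟨n, hnq⟩ := exists_nat_gt q
        refine Set.mem_iUnion.2 ⟨n, hKO hx, lt_trans hr1 ?_⟩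
        rw [show ((n : ℕ) : EReal) = ((n : ℝ) : EReal) by norm_cast]
        exact_mod_cast hnq)
    (by
      intro m n
      refine ⟨max m n, fun x hx => ⟨hx.1, lt_of_lt_of_le hx.2 ?_⟩, fun x hx => ⟨hx.1, lt_of_lt_of_le hx.2 ?_⟩⟩
      · have : (m : ℝ) ≤ ((max m n : ℕ) : ℝ) := by exact_mod_cast le_max_left m n
        rw [show ((m : ℕ) : EReal) = ((m : ℝ) : EReal) by norm_cast,
          show (((max m n : ℕ)) : EReal) = (((max m n : ℕ) : ℝ) : EReal) by norm_cast]
        exact_mod_cast this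
      · have : (n : ℝ) ≤ ((max m n : ℕ) : ℝ) := by exact_mod_cast le_max_right m n
        rw [show ((n : ℕ) : EReal) = ((n : ℝ) : EReal) by norm_cast,
          show (((max m n : ℕ)) : EReal) = (((max m n : ℕ) : ℝ) : EReal) by norm_cast]
        exact_mod_cast this)
  refine ⟨n, fun x hx => ?_⟩
  have := (hn hx).2
  rw [show ((n : ℕ) : EReal) = ((n : ℝ) : EReal) by norm_cast] at this
  exact this.le

lemma usc_limsup_le {s : Set (Rd d)} {u : Rd d → EReal} {x : Rd d}
    (hu : UpperSemicontinuousWithinAt u s x) : limsup u (𝓝[s] x) ≤ u x := by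
  refine le_of_forall_gt_imp_ge_of_dense fun a ha => ?_
  exact limsup_le_of_le (by isBoundedDefault) ((hu a ha).mono fun y hy => hy.le)

lemma subh_mono {O U : Set (Rd d)} {u : Rd d → EReal} (h : IsSubhOn O u) (hUO : U ⊆ O) :
    IsSubhOn U u :=
  ⟨fun x hx => (h.1 x (hUO hx)).mono hUO, fun x hx => h.2.1 x (hUO hx),
    fun x hx r hr hsub => h.2.2 x (hUO hx) r hr (hsub.trans hUO)⟩

end PF

namespace PF

variable {d : ℕ}

lemma maxp (hd : 1 ≤ d) {U : Set (Rd d)} (hUo : IsOpen U) (hUb : Bornology.IsBounded U)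
    {u : Rd d → EReal} (hu : IsSubhOn U u)
    (hb : ∀ y ∈ frontier U, limsup u (𝓝[U] y) ≤ 0) : ∀ x ∈ U, u x ≤ 0 := by
  by_contra hcon
  push_neg at hcon
  obtain ⟨x₀, hx₀U, hx₀⟩ := hcon
  set S := sSup (u '' U) with hS
  have hSpos : 0 < S := lt_of_lt_of_le hx₀ (le_sSup ⟨x₀, hx₀U, rfl⟩)
  have hle : ∀ x ∈ U, u x ≤ S := fun x hx => le_sSup ⟨x, hx, rfl⟩
  have himg : (u '' U).Nonempty := ⟨u x₀, x₀, hx₀U, rfl⟩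
  obtain ⟨sq, -, hsqt, hsqm⟩ := exists_seq_tendsto_sSup himg (OrderTop.bddAbove _)
  choose xs hxsU hxs using hsqm
  obtain ⟨z, hzcl, φ, hφmono, hφt⟩ := hUb.isCompact_closure.tendsto_subseq
    (fun n => subset_closure (hxsU n))
  have hmaplim : Tendsto (fun n => u (xs (φ n))) atTop (𝓝 S) := by
    have h1 := hsqt.comp hφmono.tendsto_atTop
    have h2 : (fun n => u (xs (φ n))) = fun n => sq (φ n) := funext fun n => hxs (φ n)
    rw [h2]
    exact h1
  have htends : Tendsto (fun n => xs (φ n)) atTop (𝓝[U] z) := by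
    rw [tendsto_nhdsWithin_iff]
    exact ⟨hφt, Eventually.of_forall fun n => hxsU (φ n)⟩
  have hSlim : S ≤ limsup u (𝓝[U] z) := by
    rw [limsup_eq]
    exact le_sInf fun a ha => le_of_tendsto hmaplim (htends.eventually ha)
  have hzU : z ∈ U := by
    by_contra hzU
    have hfr : z ∈ frontier U := by
      rw [hUo.frontier_eq]; exact ⟨hzcl, hzU⟩
    exact absurd (hSlim.trans (hb z hfr)) (not_le.2 hSpos)
  have hzS : u z = S := le_antisymm (hle z hzU) (hSlim.trans (usc_limsup_le (hu.1 z hzU)))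
  have hStop : S ≠ ⊤ := (hzS ▸ hu.2.1 z hzU).ne
  have hSbot : S ≠ ⊥ := ne_bot_of_gt hSpos
  have hSr : S = ((S.toReal : ℝ) : EReal) := (EReal.coe_toReal hStop hSbot).symm
  have hSrpos : 0 < S.toReal := by
    have h0 : ((0 : ℝ) : EReal) < ((S.toReal : ℝ) : EReal) := by
      rw [← hSr]; exact_mod_cast hSpos
    exact_mod_cast EReal.coe_lt_coe_iff.1 h0
  set A := {x | x ∈ U ∧ u x = S} with hA
  have hAopen : IsOpen A := by
    rw [Metric.isOpen_iff]
    rintro x₁ ⟨hx₁U, hx₁S⟩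
    obtain ⟨ε, hε, hball⟩ := Metric.isOpen_iff.1 hUo x₁ hx₁U
    refine ⟨ε/2, by positivity, ?_⟩
    have hcb : closedBall x₁ (ε/2) ⊆ U := fun w hw =>
      hball (lt_of_le_of_lt (mem_closedBall.1 hw) (by linarith))
    set B := ball x₁ (ε/2) with hB
    set μ := volume.restrict B with hμ
    have hBU : B ⊆ U := ball_subset_closedBall.trans hcb
    have hvolpos : 0 < volume B := measure_ball_pos _ _ (by positivity)
    have hvolfin : volume B ≠ ⊤ := measure_ball_lt_top.ne
    have hmean := hu.2.2 x₁ hx₁U (ε/2) (by positivity) hcb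
    rw [hx₁S] at hmean
    have hlhs : S * (((volume B).toReal : ℝ) : EReal)
        = ((S.toReal * (volume B).toReal : ℝ) : EReal) := by
      conv_lhs => rw [hSr]
      rw [← EReal.coe_mul]
    rw [hlhs] at hmean
    have hum : AEMeasurable u μ := usc_aemeasurable hUo hu.1 measurableSet_ball hBU
    have hepum : AEMeasurable (fun w => epos (u w)) μ := measurable_epos.comp_aemeasurable hum
    have hub : ∀ᵐ w ∂μ, u w ≤ S :=
      ae_restrict_of_forall_mem measurableSet_ball fun w hw => hle w (hBU hw)
    have hub2 : ∀ᵐ w ∂μ, epos (u w) ≤ ENNReal.ofReal S.toReal := by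
      filter_upwards [hub] with w hw
      calc epos (u w) ≤ epos S := epos_mono hw
        _ = ENNReal.ofReal S.toReal := by rw [hSr, epos_coe, EReal.toReal_coe]
    set P := ∫⁻ w, epos (u w) ∂μ with hPdef
    set N := ∫⁻ w, epos (-(u w)) ∂μ with hNdef
    have hPle : P ≤ ENNReal.ofReal S.toReal * volume B := by
      calc P ≤ ∫⁻ _, ENNReal.ofReal S.toReal ∂μ := lintegral_mono_ae hub2
        _ = ENNReal.ofReal S.toReal * volume B := by
            rw [lintegral_const, Measure.restrict_apply_univ]
    have hmulfin : ENNReal.ofReal S.toReal * volume B ≠ ⊤ :=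
      ENNReal.mul_ne_top ENNReal.ofReal_ne_top hvolfin
    have hPfin : P ≠ ⊤ := fun h => hmulfin (top_le_iff.1 (h ▸ hPle))
    have hmean2 : ((S.toReal * (volume B).toReal : ℝ) : EReal) ≤ (P : EReal) - (N : EReal) :=
      hmean
    have hNfin : N ≠ ⊤ := by
      intro hN
      rw [hN, EReal.coe_ennreal_top, EReal.sub_top] at hmean2
      exact (EReal.bot_lt_coe _).not_ge hmean2
    rw [ecoe_sub _ _ hPfin hNfin, EReal.coe_le_coe_iff] at hmean2
    have hPto : P.toReal ≤ S.toReal * (volume B).toReal := by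
      have h3 := ENNReal.toReal_mono hmulfin hPle
      rwa [ENNReal.toReal_mul, ENNReal.toReal_ofReal hSrpos.le] at h3
    have hPeq : P = ENNReal.ofReal S.toReal * volume B := by
      refine (ENNReal.toReal_eq_toReal_iff' hPfin hmulfin).1 ?_
      rw [ENNReal.toReal_mul, ENNReal.toReal_ofReal hSrpos.le]
      have hN0 : 0 ≤ N.toReal := ENNReal.toReal_nonneg
      linarith
    have hzero : ∫⁻ w, (ENNReal.ofReal S.toReal - epos (u w)) ∂μ = 0 := by
      rw [lintegral_sub' hepum hPfin hub2]
      rw [lintegral_const, Measure.restrict_apply_univ, ← hPeq, tsub_self]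
    have hae : ∀ᵐ w ∂μ, (ENNReal.ofReal S.toReal - epos (u w)) = 0 := by
      have h7 := (lintegral_eq_zero_iff' (aemeasurable_const.sub hepum)).1 hzero
      filter_upwards [h7] with w hw
      simpa using hw
    have haeS : ∀ᵐ w ∂μ, u w = S := by
      filter_upwards [hae, hub, hub2] with w h1 h2 h3
      have h4 : ENNReal.ofReal S.toReal ≤ epos (u w) := tsub_eq_zero_iff_le.1 h1
      have h5 : epos (u w) = ENNReal.ofReal S.toReal := le_antisymm h3 h4
      have hwtop : u w ≠ ⊤ := (lt_of_le_of_lt h2 (lt_top_iff_ne_top.2 hStop)).ne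
      generalize hq : u w = q at h5 hwtop ⊢
      induction q using EReal.rec with
      | top => exact absurd rfl hwtop
      | bot =>
        rw [epos_bot] at h5
        exact absurd h5.symm (ENNReal.ofReal_pos.2 hSrpos).ne'
      | coe a =>
        rw [epos_coe] at h5
        rcases le_or_gt a 0 with ha | ha
        · rw [ENNReal.ofReal_eq_zero.2 ha] at h5
          exact absurd h5.symm (ENNReal.ofReal_pos.2 hSrpos).ne'
        · have h6 : a = S.toReal := by
            rw [ENNReal.ofReal_eq_ofReal_iff ha.le hSrpos.le] at h5
            exact h5
          rw [h6, ← hSr]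
    have hnull : μ {w | u w ≠ S} = 0 := by
      rw [← ae_iff] at *
      exact haeS
    intro y hy
    refine ⟨hBU hy, ?_⟩
    by_contra hne
    have hlt : u y < S := lt_of_le_of_ne (hle y (hBU hy)) hne
    have hev : ∀ᶠ w in 𝓝 y, u w < S := by
      have := hu.1 y (hBU hy) S hlt
      rwa [hUo.nhdsWithin_eq (hBU hy)] at this
    obtain ⟨δ, hδ, hδball⟩ := Metric.eventually_nhds_iff_ball.1 hev
    have hyx₁ : dist y x₁ < ε/2 := mem_ball.1 hy
    set δ' := min δ (ε/2 - dist y x₁) with hδ'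
    have hδ'pos : 0 < δ' := lt_min hδ (by linarith)
    have hsubset : ball y δ' ⊆ {w | u w ≠ S} ∩ B := by
      intro w hw
      have hw1 : dist w y < δ := lt_of_lt_of_le (mem_ball.1 hw) (min_le_left _ _)
      have hw2 : dist w y < ε/2 - dist y x₁ := lt_of_lt_of_le (mem_ball.1 hw) (min_le_right _ _)
      refine ⟨(hδball w (mem_ball.2 hw1)).ne, mem_ball.2 ?_⟩
      calc dist w x₁ ≤ dist w y + dist y x₁ := dist_triangle _ _ _
        _ < ε/2 := by linarith
    have hpos : 0 < volume (ball y δ') := measure_ball_pos _ _ hδ'pos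
    have hle0 : volume (ball y δ') ≤ μ {w | u w ≠ S} := by
      rw [hμ, Measure.restrict_apply' measurableSet_ball]
      exact measure_mono hsubset
    rw [hnull] at hle0
    exact (lt_irrefl _ (lt_of_lt_of_le hpos hle0)).elim
  have hAne : A.Nonempty := ⟨z, hzU, hzS⟩
  have hAU : A ⊆ U := fun w hw => hw.1
  have hAneU : A ≠ Set.univ := by
    intro h
    haveI : Nonempty (Fin d) := ⟨⟨0, hd⟩⟩
    haveI : Nontrivial (Rd d) := inferInstance
    exact NormedSpace.unbounded_univ ℝ (Rd d) (h ▸ hUb.subset hAU)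
  have hfrA : (frontier A).Nonempty := by
    rw [Set.nonempty_iff_ne_empty]
    intro h
    exact hAneU ((isClopen_iff_frontier_eq_empty.2 h).eq_univ hAne)
  obtain ⟨y, hy⟩ := hfrA
  rw [hAopen.frontier_eq] at hy
  obtain ⟨hyc, hyA⟩ := hy
  haveI hNB : (𝓝[A] y).NeBot := mem_closure_iff_nhdsWithin_neBot.1 hyc
  have heq : ∀ᶠ w in 𝓝[A] y, u w = S :=
    eventually_mem_nhdsWithin.mono fun w hw => hw.2
  have hlimA : limsup u (𝓝[A] y) = S := by
    rw [limsup_congr heq, limsup_const]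
  have hSle2 : S ≤ limsup u (𝓝[U] y) :=
    hlimA ▸ limsup_le_limsup_of_le (nhdsWithin_mono y hAU)
  by_cases hyU : y ∈ U
  · have hyS : S ≤ u y := hSle2.trans (usc_limsup_le (hu.1 y hyU))
    exact hyA ⟨hyU, le_antisymm (hle y hyU) hyS⟩
  · have hyfr : y ∈ frontier U := by
      rw [hUo.frontier_eq]
      exact ⟨closure_mono hAU hyc, hyU⟩
    exact absurd (hSle2.trans (hb y hyfr)) (not_le.2 hSpos)

end PF

namespace PF

variable {d : ℕ}

lemma add_coe_mul_coe (a : EReal) (s v : ℝ) (hv : 0 ≤ v) :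
    (a + (s : EReal)) * (v : EReal) = a * (v : EReal) + ((s * v : ℝ) : EReal) := by
  rcases eq_or_lt_of_le hv with h0 | hpos
  · rw [← h0]
    simp only [EReal.coe_zero, mul_zero]
    norm_num
  · induction a using EReal.rec with
    | bot =>
      rw [EReal.bot_add, show (⊥ : EReal) * (v : EReal) = ⊥ from by
        rw [EReal.mul_comm]; exact EReal.coe_mul_bot_of_pos hpos, EReal.bot_add]
    | top =>
      rw [EReal.top_add_coe, EReal.top_mul_coe_of_pos hpos, EReal.top_add_coe]
    | coe a =>
      rw [← EReal.coe_add, ← EReal.coe_mul, ← EReal.coe_mul, ← EReal.coe_add]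
      norm_cast
      ring

lemma usc_add_cont {O : Set (Rd d)} {f : Rd d → EReal} {φ : Rd d → ℝ}
    (hf : UpperSemicontinuousOn f O) (hftop : ∀ x ∈ O, f x < ⊤) (hφ : ContinuousOn φ O) :
    UpperSemicontinuousOn (fun x => f x + (φ x : EReal)) O := by
  intro x hx y hy
  by_cases hytop : y = ⊤
  · -- find real bound
    obtain ⟨q, hq⟩ : ∃ q : ℝ, f x < (q : EReal) := by
      rcases EReal.lt_iff_exists_real_btwn.1 (hftop x hx) with ⟨q, hq1, hq2⟩
      exact ⟨q, hq1⟩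
    have h1 := hf x hx (q : EReal) hq
    have h2 : ∀ᶠ w in 𝓝[O] x, φ w < φ x + 1 :=
      (hφ x hx).eventually_lt_const (by linarith)
    filter_upwards [h1, h2] with w hw1 hw2
    rw [hytop]
    calc f w + (φ w : EReal) < (q : EReal) + ((φ x + 1 : ℝ) : EReal) :=
          EReal.add_lt_add hw1 (EReal.coe_lt_coe_iff.2 hw2)
      _ = ((q + (φ x + 1) : ℝ) : EReal) := by norm_cast
      _ < ⊤ := EReal.coe_lt_top _
  · have hybot : y ≠ ⊥ := by
      intro h
      rw [h] at hy
      exact not_lt_bot hy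
    have hyr : y = ((y.toReal : ℝ) : EReal) := (EReal.coe_toReal hytop hybot).symm
    -- find q real with f x < q and q + φ x < y.toReal
    obtain ⟨q, hq1, hq2⟩ : ∃ q : ℝ, f x < (q : EReal) ∧ q + φ x < y.toReal := by
      by_cases hfbot : f x = ⊥
      · refine ⟨y.toReal - φ x - 1, ?_, by linarith⟩
        rw [hfbot]
        exact EReal.bot_lt_coe _
      · have hfr : f x = ((f x).toReal : EReal) :=
          (EReal.coe_toReal (hftop x hx).ne hfbot).symm
        have hlt : (f x).toReal + φ x < y.toReal := by
          have : ((((f x).toReal + φ x : ℝ)) : EReal) < ((y.toReal : ℝ) : EReal) := by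
            rw [EReal.coe_add, ← hfr, ← hyr]
            exact hy
          exact_mod_cast this
        refine ⟨(f x).toReal + (y.toReal - ((f x).toReal + φ x)) / 2, ?_, by linarith⟩
        rw [hfr]
        exact_mod_cast (by linarith : (f x).toReal < (f x).toReal + (y.toReal - ((f x).toReal + φ x)) / 2)
    have h1 := hf x hx (q : EReal) hq1
    have h2 : ∀ᶠ w in 𝓝[O] x, φ w < y.toReal - q :=
      (hφ x hx).eventually_lt_const (by linarith)
    filter_upwards [h1, h2] with w hw1 hw2
    calc f w + (φ w : EReal) < (q : EReal) + ((y.toReal - q : ℝ) : EReal) :=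
          EReal.add_lt_add hw1 (EReal.coe_lt_coe_iff.2 hw2)
      _ = ((y.toReal : ℝ) : EReal) := by rw [← EReal.coe_add]; norm_num
      _ = y := hyr.symm

end PF

namespace PF

variable {d : ℕ}

lemma subh_add_superh {O : Set (Rd d)} (hO : IsOpen O) {V : Rd d → EReal} {φ : Rd d → ℝ}
    (hV : IsSubhOn O V) (hφc : ContinuousOn φ O)
    (hφmean : ∀ x ∈ O, ∀ r : ℝ, 0 < r → closedBall x r ⊆ O →
      φ x * (volume (ball x r)).toReal ≤ ∫ w in ball x r, φ w) :
    IsSubhOn O (fun x => V x + (φ x : EReal)) := by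
  refine ⟨usc_add_cont hV.1 hV.2.1 hφc,
    fun x hx => EReal.add_lt_top (hV.2.1 x hx).ne (EReal.coe_ne_top _), ?_⟩
  intro x hx r hr hsub
  set B := ball x r with hB
  set μ := volume.restrict B with hμ
  haveI : IsFiniteMeasure μ := ⟨by
    rw [hμ, Measure.restrict_apply_univ]
    exact measure_ball_lt_top⟩
  have hBO : B ⊆ O := ball_subset_closedBall.trans hsub
  obtain ⟨M, hM⟩ := (isCompact_closedBall x r).exists_bound_of_continuousOn (hφc.mono hsub)
  have hφm : AEMeasurable φ μ := (hφc.mono hBO).aemeasurable measurableSet_ball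
  have hφi : Integrable φ μ := by
    refine ⟨hφm.aestronglyMeasurable, HasFiniteIntegral.of_bounded (C := M) ?_⟩
    exact ae_restrict_of_forall_mem measurableSet_ball
      fun w hw => hM w (ball_subset_closedBall hw)
  have hVm : AEMeasurable V μ := usc_aemeasurable hO hV.1 measurableSet_ball hBO
  have hVtop : ∀ᵐ w ∂μ, V w ≠ ⊤ := ae_restrict_of_forall_mem measurableSet_ball
    fun w hw => (hV.2.1 w (hBO hw)).ne
  obtain ⟨MV, hMV⟩ := usc_bddAbove hO hV.1 hV.2.1 (isCompact_closedBall x r) hsub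
  have hfP : ∫⁻ w, epos (V w) ∂μ ≠ ⊤ := by
    have hle : ∫⁻ w, epos (V w) ∂μ ≤ ∫⁻ _, ENNReal.ofReal MV ∂μ := by
      refine lintegral_mono_ae (ae_restrict_of_forall_mem measurableSet_ball fun w hw => ?_)
      calc epos (V w) ≤ epos ((MV : ℝ) : EReal) :=
            epos_mono (hMV w (ball_subset_closedBall hw))
        _ = ENNReal.ofReal MV := epos_coe MV
    have hfin : (∫⁻ _, ENNReal.ofReal MV ∂μ) ≠ ⊤ := by
      rw [lintegral_const, Measure.restrict_apply_univ]
      exact ENNReal.mul_ne_top ENNReal.ofReal_ne_top measure_ball_lt_top.ne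
    exact fun h => hfin (top_le_iff.1 (h ▸ hle))
  have hadd := eintegral_add_real μ hVm hφi hVtop hfP
  have h1 := hV.2.2 x hx r hr hsub
  rw [add_coe_mul_coe _ _ _ ENNReal.toReal_nonneg]
  calc V x * (((volume B).toReal : ℝ) : EReal) + ((φ x * (volume B).toReal : ℝ) : EReal)
      ≤ eintegral μ V + ((∫ w, φ w ∂μ : ℝ) : EReal) := by
        refine add_le_add h1 ?_
        exact EReal.coe_le_coe_iff.2 (hφmean x hx r hr hsub)
    _ = eintegral μ (fun w => V w + (φ w : EReal)) := hadd.symm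

lemma kk_eq (hd : 2 ≤ d) {t : ℝ} (ht : 0 < t) :
    kk d t = (((if d = 2 then Real.log t else -(t ^ (d - 2 : ℕ))⁻¹ : ℝ)) : EReal) := by
  unfold kk
  rw [if_neg (by omega : ¬ d = 1), if_neg (not_le.2 ht)]
  split_ifs with h <;> rfl

lemma kk_bound (hd : 2 ≤ d) (B : ℝ) :
    ∀ᶠ t in 𝓝[>] (0 : ℝ), kk d t ≤ ((-B : ℝ) : EReal) := by
  have hbase : Tendsto (fun t : ℝ => if d = 2 then Real.log t else -(t ^ (d - 2 : ℕ))⁻¹)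
      (𝓝[>] (0 : ℝ)) atBot := by
    by_cases h2 : d = 2
    · simp only [h2]
      simpa using Real.tendsto_log_nhdsGT_zero
    · simp only [h2, if_false]
      have hm : d - 2 ≠ 0 := by omega
      have hpow : Tendsto (fun t : ℝ => t ^ (d - 2 : ℕ)) (𝓝[>] (0 : ℝ)) (𝓝[>] (0 : ℝ)) := by
        refine tendsto_nhdsWithin_of_tendsto_nhds_of_eventually_within _ ?_ ?_
        · have := (continuous_pow (d - 2 : ℕ)).tendsto (0 : ℝ)
          rw [zero_pow hm] at this
          exact this.mono_left nhdsWithin_le_nhds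
        · filter_upwards [self_mem_nhdsWithin] with t ht
          exact pow_pos (Set.mem_Ioi.1 ht) _
      have hinv : Tendsto (fun t : ℝ => (t ^ (d - 2 : ℕ))⁻¹) (𝓝[>] (0 : ℝ)) atTop :=
        hpow.inv_tendsto_nhdsGT_zero
      exact tendsto_neg_atTop_atBot.comp hinv
  have hev := hbase.eventually_le_atBot (-B)
  filter_upwards [hev, self_mem_nhdsWithin] with t h1 h2
  rw [kk_eq hd h2]
  exact_mod_cast h1

end PF

theorem stmt9 {d : ℕ} (hd : 2 ≤ d) (D : Set (Rd d)) (hDo : IsOpen D)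
    (hDc : IsConnected D) (hDb : Bornology.IsBounded D)
    (hnp : ¬ IsPolar (frontier D)) (o : Rd d) (ho : o ∈ D)
    (c : ℝ) (hc : 0 ≤ c) (V g : Rd d → EReal)
    (hV : IsSubhOn (D \ {o}) V)
    -- `g` is the Green's function of `D` with pole `o`:
    (hg_sub : IsSubhOn (D \ {o}) g) (hg_sup : IsSubhOn (D \ {o}) (fun x => -(g x)))
    (hg_pos : ∀ x ∈ D \ {o}, 0 ≤ g x)
    (hg_asym : ∃ C : ℝ, ∀ᶠ x in nhdsWithin o ({o}ᶜ : Set (Rd d)),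
      -(kk d (dist x o)) - (C : EReal) ≤ g x ∧ g x ≤ -(kk d (dist x o)) + (C : EReal))
    (hsing : ∀ ε : ℝ, 0 < ε →
      ∀ᶠ x in nhdsWithin o ({o}ᶜ : Set (Rd d)),
        V x ≤ ((c + ε : ℝ) : EReal) * (-(kk d (dist x o))))
    (hbd : ∀ y ∈ frontier D, limsup V (nhdsWithin y D) ≤ 0) :
    ∀ x ∈ D \ {o}, V x ≤ (c : EReal) * g x := by
  intro x hx
  obtain ⟨hxD, hxo⟩ := hx
  have hxo' : x ≠ o := hxo
  set O := D \ {o} with hOdef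
  have hOopen : IsOpen O := hDo.sdiff isClosed_singleton
  have hgtop : ∀ w ∈ O, g w ≠ ⊤ := fun w hw => (hg_sub.2.1 w hw).ne
  have hgbot : ∀ w ∈ O, g w ≠ ⊥ := by
    intro w hw h
    have h2 := hg_sup.2.1 w hw
    simp only [h] at h2
    simp at h2
  have hgr : ∀ w ∈ O, g w = (((g w).toReal : ℝ) : EReal) :=
    fun w hw => (EReal.coe_toReal (hgtop w hw) (hgbot w hw)).symm
  set G : Rd d → ℝ := fun w => (g w).toReal with hGdef
  have hGcont : ContinuousOn G O := by
    intro w hw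
    have h1 : ContinuousWithinAt g O w := by
      rw [continuousWithinAt_iff_lower_upperSemicontinuousWithinAt]
      constructor
      · intro y hy
        have h2 := hg_sup.1 w hw (-y) (EReal.neg_lt_neg_iff.2 hy)
        filter_upwards [h2] with v hv
        exact EReal.neg_lt_neg_iff.1 hv
      · exact hg_sub.1 w hw
    exact (EReal.tendsto_toReal (hgtop w hw) (hgbot w hw)).comp h1
  have hGnn : ∀ w ∈ O, 0 ≤ G w := by
    intro w hw
    have h2 := hg_pos w hw
    rw [hgr w hw] at h2
    exact_mod_cast h2
  have hxO : x ∈ O := ⟨hxD, hxo⟩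
  suffices hsuf : ∀ ε : ℝ, 0 < ε → V x ≤ (((c + ε) * G x : ℝ) : EReal) by
    have hgx : g x = ((G x : ℝ) : EReal) := hgr x hxO
    have hVfin : V x < ⊤ := hV.2.1 x hxO
    rw [hgx, ← EReal.coe_mul]
    by_cases hVbot : V x = ⊥
    · rw [hVbot]; exact bot_le
    · have hVr : V x = (((V x).toReal : ℝ) : EReal) := (EReal.coe_toReal hVfin.ne hVbot).symm
      have hreal : ∀ ε : ℝ, 0 < ε → (V x).toReal ≤ (c + ε) * G x := by
        intro ε hε
        have h3 := hsuf ε hε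
        rw [hVr] at h3
        exact_mod_cast h3
      have hGx0 : 0 ≤ G x := hGnn x hxO
      have hfinal : (V x).toReal ≤ c * G x := by
        rcases eq_or_lt_of_le hGx0 with h0 | hpos
        · have := hreal 1 one_pos
          rw [← h0] at *
          linarith [hreal 1 one_pos]
        · refine le_of_forall_pos_le_add fun δ hδ => ?_
          have := hreal (δ / G x) (div_pos hδ hpos)
          calc (V x).toReal ≤ (c + δ / G x) * G x := this
            _ = c * G x + δ := by field_simp
      rw [hVr]
      exact_mod_cast hfinal
  intro ε hε
  obtain ⟨C, hC⟩ := hg_asym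
  set B₀ := (2 * ((c + ε) * |C| + 1)) / ε with hB₀def
  have hdist : Tendsto (fun w : Rd d => dist w o) (𝓝[({o}ᶜ : Set (Rd d))] o) (𝓝[>] (0 : ℝ)) := by
    refine tendsto_nhdsWithin_of_tendsto_nhds_of_eventually_within _ ?_ ?_
    · have h1 : Tendsto (fun w : Rd d => dist w o) (𝓝 o) (𝓝 (dist o o)) :=
        (continuous_id.dist continuous_const).tendsto o
      rw [dist_self] at h1
      exact h1.mono_left nhdsWithin_le_nhds
    · filter_upwards [self_mem_nhdsWithin] with w hw
      exact dist_pos.2 hw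
  have hkkb : ∀ᶠ w in 𝓝[({o}ᶜ : Set (Rd d))] o, kk d (dist w o) ≤ ((-B₀ : ℝ) : EReal) :=
    hdist.eventually (PF.kk_bound hd B₀)
  have hmemD : ∀ᶠ w in 𝓝[({o}ᶜ : Set (Rd d))] o, w ∈ D :=
    eventually_nhdsWithin_of_eventually_nhds (hDo.eventually_mem ho)
  have hall := (hsing (ε/2) (half_pos hε)).and (hC.and (hkkb.and hmemD))
  rw [eventually_iff, Metric.mem_nhdsWithin_iff] at hall
  obtain ⟨r₁, hr₁pos, hr₁⟩ := hall
  -- the comparison function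
  set φ : Rd d → ℝ := fun w => (c + ε) * (-G w) with hφdef
  set u : Rd d → EReal := fun w => V w + ((φ w : ℝ) : EReal) with hudef
  have hunear : ∀ w, w ∈ D → w ≠ o → dist w o < r₁ → u w ≤ 0 := by
    intro w hwD hwo hwr
    have hmem : w ∈ ball o r₁ ∩ ({o}ᶜ : Set (Rd d)) := ⟨mem_ball.2 (by rwa [dist_comm] at hwr ⊢), hwo⟩
    obtain ⟨h1, h2, h3, -⟩ := hr₁ hmem
    have hwO : w ∈ O := ⟨hwD, hwo⟩
    have htpos : 0 < dist w o := dist_pos.2 hwo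
    have hkkeq := PF.kk_eq hd htpos
    set κ : ℝ := (if d = 2 then Real.log (dist w o) else -(dist w o ^ (d - 2 : ℕ))⁻¹) with hκ
    have hκB : κ ≤ -B₀ := by
      rw [hkkeq] at h3
      exact_mod_cast h3
    have hgw : g w = ((G w : ℝ) : EReal) := hgr w hwO
    have hgl : -κ - C ≤ G w := by
      have h4 := h2.1
      rw [hkkeq, hgw, ← EReal.coe_neg, ← EReal.coe_sub] at h4
      exact_mod_cast h4
    have hVw : V w ≤ (((c + ε/2) * (-κ) : ℝ) : EReal) := by
      have h5 := h1
      rw [hkkeq, ← EReal.coe_neg, ← EReal.coe_mul] at h5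
      exact h5
    have hφle : φ w ≤ (c + ε) * (κ + C) := by
      have h6 : -G w ≤ κ + C := by linarith
      exact mul_le_mul_of_nonneg_left h6 (by linarith)
    have huw : u w ≤ (((c + ε/2) * (-κ) + (c + ε) * (κ + C) : ℝ) : EReal) := by
      rw [hudef]
      calc V w + ((φ w : ℝ) : EReal)
          ≤ (((c + ε/2) * (-κ) : ℝ) : EReal) + (((c + ε) * (κ + C) : ℝ) : EReal) :=
            add_le_add hVw (EReal.coe_le_coe_iff.2 hφle)
        _ = (((c + ε/2) * (-κ) + (c + ε) * (κ + C) : ℝ) : EReal) := by rw [EReal.coe_add]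
    refine le_trans huw ?_
    have hfinal : (c + ε/2) * (-κ) + (c + ε) * (κ + C) ≤ 0 := by
      have h7 : ε/2 * B₀ = (c + ε) * |C| + 1 := by
        rw [hB₀def]
        field_simp
      have h8 : C ≤ |C| := le_abs_self C
      have h9 : 0 ≤ |C| := abs_nonneg C
      nlinarith [hκB, h7, h8, h9, hε, hc]
    calc (((c + ε/2) * (-κ) + (c + ε) * (κ + C) : ℝ) : EReal) ≤ ((0 : ℝ) : EReal) :=
          EReal.coe_le_coe_iff.2 hfinal
      _ = 0 := by norm_num
  -- the superharmonic mean-value property of φ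
  have hφmean : ∀ w ∈ O, ∀ ρ : ℝ, 0 < ρ → closedBall w ρ ⊆ O →
      φ w * (volume (ball w ρ)).toReal ≤ ∫ v in ball w ρ, φ v := by
    intro w hw ρ hρ hsub
    set μ := volume.restrict (ball w ρ) with hμdef
    haveI : IsFiniteMeasure μ := ⟨by
      rw [hμdef, Measure.restrict_apply_univ]
      exact measure_ball_lt_top⟩
    have hBO : ball w ρ ⊆ O := ball_subset_closedBall.trans hsub
    have hmean := hg_sup.2.2 w hw ρ hρ hsub
    obtain ⟨M, hM⟩ := (isCompact_closedBall w ρ).exists_bound_of_continuousOn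
      ((hGcont.neg).mono hsub)
    have hGm : AEMeasurable (fun v => -G v) μ :=
      ((hGcont.neg).mono hBO).aemeasurable measurableSet_ball
    have hGi : Integrable (fun v => -G v) μ := by
      refine ⟨hGm.aestronglyMeasurable, HasFiniteIntegral.of_bounded (C := M) ?_⟩
      exact ae_restrict_of_forall_mem measurableSet_ball
        fun v hv => hM v (ball_subset_closedBall hv)
    have hcongr : eintegral μ (fun v => -(g v)) = eintegral μ (fun v => ((-G v : ℝ) : EReal)) := by
      refine PF.eintegral_congr_ae (ae_restrict_of_forall_mem measurableSet_ball fun v hv => ?_)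
      show -(g v) = ((-G v : ℝ) : EReal)
      rw [hgr v (hBO hv), ← EReal.coe_neg]
    rw [hcongr, PF.eintegral_coe_real hGi] at hmean
    have hL : -(g w) * (((volume (ball w ρ)).toReal : ℝ) : EReal)
        = ((-G w * (volume (ball w ρ)).toReal : ℝ) : EReal) := by
      rw [hgr w hw, ← EReal.coe_neg, ← EReal.coe_mul]
    rw [hL, EReal.coe_le_coe_iff] at hmean
    calc φ w * (volume (ball w ρ)).toReal
        = (c + ε) * (-G w * (volume (ball w ρ)).toReal) := by rw [hφdef]; ring
      _ ≤ (c + ε) * ∫ v, -G v ∂μ := mul_le_mul_of_nonneg_left hmean (by linarith)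
      _ = ∫ v, (c + ε) * -G v ∂μ := (integral_const_mul _ _).symm
      _ = ∫ v in ball w ρ, φ v := by rw [hφdef, hμdef]
  have hsubu : IsSubhOn O u :=
    PF.subh_add_superh hOopen hV (continuousOn_const.mul hGcont.neg) hφmean
  -- the domain for the maximum principle
  set r := min r₁ (dist x o) / 2 with hrdef
  have hdx : 0 < dist x o := dist_pos.2 hxo'
  have hrpos : 0 < r := by
    rw [hrdef]
    have := lt_min hr₁pos hdx
    linarith
  have hrr₁ : r < r₁ := by
    rw [hrdef]
    have h1 : min r₁ (dist x o) ≤ r₁ := min_le_left _ _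
    linarith
  have hrx : r < dist x o := by
    rw [hrdef]
    have h1 : min r₁ (dist x o) ≤ dist x o := min_le_right _ _
    linarith
  set U := D \ closedBall o r with hUdef
  have hUopen : IsOpen U := hDo.sdiff isClosed_closedBall
  have hUb : Bornology.IsBounded U := hDb.subset Set.diff_subset
  have hUO : U ⊆ O := by
    rintro w ⟨hwD, hwB⟩
    refine ⟨hwD, fun h => hwB ?_⟩
    rw [Set.mem_singleton_iff] at h
    rw [h]
    exact mem_closedBall_self hrpos.le
  have hUne : ∀ w ∈ U, r < dist w o := by
    rintro w ⟨-, hwB⟩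
    by_contra h
    exact hwB (mem_closedBall.2 (not_lt.1 h))
  have hbdry : ∀ y ∈ frontier U, limsup u (𝓝[U] y) ≤ 0 := by
    intro y hy
    rw [hUopen.frontier_eq] at hy
    obtain ⟨hyc, hyU⟩ := hy
    by_cases hyD : y ∈ D
    · -- y is on the sphere of radius r
      have hyB : y ∈ closedBall o r := by
        by_contra h
        exact hyU ⟨hyD, h⟩
      have hyr : dist y o = r := by
        rcases eq_or_lt_of_le (mem_closedBall.1 hyB) with h | h
        · exact h
        · exfalso
          rw [Metric.mem_closure_iff] at hyc
          obtain ⟨b, hbU, hbd⟩ := hyc (r - dist y o) (by linarith)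
          have hb1 : r < dist b o := hUne b hbU
          have h2 : dist b o ≤ dist b y + dist y o := dist_triangle _ _ _
          have h3 : dist b y = dist y b := dist_comm _ _
          linarith
      have hev1 : ∀ᶠ w in 𝓝[U] y, dist w o < r₁ := by
        have hcw : ContinuousWithinAt (fun w : Rd d => dist w o) U y :=
          (continuous_id.dist continuous_const).continuousWithinAt
        exact hcw.eventually_lt_const (by show dist y o < r₁; rw [hyr]; exact hrr₁)
      have hev2 : ∀ᶠ w in 𝓝[U] y, w ∈ U := eventually_mem_nhdsWithin
      refine limsup_le_of_le (by isBoundedDefault) ?_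
      filter_upwards [hev1, hev2] with w hw1 hw2
      have hwO := hUO hw2
      exact hunear w hwO.1 hwO.2 hw1
    · have hyfr : y ∈ frontier D := by
        rw [hDo.frontier_eq]
        exact ⟨closure_mono (Set.diff_subset) hyc, hyD⟩
      have hev : ∀ᶠ w in 𝓝[U] y, u w ≤ V w := by
        filter_upwards [eventually_mem_nhdsWithin] with w hw
        have hwO := hUO hw
        have hφ0 : ((φ w : ℝ) : EReal) ≤ 0 := by
          have h1 : φ w ≤ 0 := mul_nonpos_of_nonneg_of_nonpos (by linarith)
            (neg_nonpos.2 (hGnn w hwO))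
          calc ((φ w : ℝ) : EReal) ≤ ((0 : ℝ) : EReal) := EReal.coe_le_coe_iff.2 h1
            _ = 0 := by norm_num
        calc u w = V w + ((φ w : ℝ) : EReal) := rfl
          _ ≤ V w + 0 := add_le_add_right hφ0 _
          _ = V w := add_zero _
      calc limsup u (𝓝[U] y) ≤ limsup V (𝓝[U] y) :=
            limsup_le_limsup hev
        _ ≤ limsup V (𝓝[D] y) := limsup_le_limsup_of_le (nhdsWithin_mono y Set.diff_subset)
        _ ≤ 0 := hbd y hyfr
  have hmax := PF.maxp (by omega) hUopen hUb (PF.subh_mono hsubu hUO) hbdry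
  have hxU : x ∈ U := ⟨hxD, fun h => (not_lt.2 (mem_closedBall.1 h)) (by rwa [dist_comm] at hrx ⊢)⟩
  have hux : u x ≤ 0 := hmax x hxU
  -- conclude V x ≤ (c+ε) * G x
  by_cases hVbot : V x = ⊥
  · rw [hVbot]; exact bot_le
  · have hVfin : V x < ⊤ := hV.2.1 x hxO
    have hVr : V x = (((V x).toReal : ℝ) : EReal) := (EReal.coe_toReal hVfin.ne hVbot).symm
    have h1 : u x = (((V x).toReal + φ x : ℝ) : EReal) := by
      show V x + ((φ x : ℝ) : EReal) = _
      conv_lhs => rw [hVr]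
      rw [← EReal.coe_add]
    rw [h1] at hux
    have h2 : (V x).toReal + φ x ≤ 0 := by
      have h3 : (((V x).toReal + φ x : ℝ) : EReal) ≤ ((0 : ℝ) : EReal) := by
        rwa [show ((0 : ℝ) : EReal) = (0 : EReal) by norm_num]
      exact_mod_cast h3
    have h4 : (V x).toReal ≤ (c + ε) * G x := by
      have : φ x = (c + ε) * (-G x) := rfl
      nlinarith [h2]
    rw [hVr]
    exact_mod_cast h4
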